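/- For the 3×3 block matrix M with 2×2 block G (satisfying tr G + T·det G = 0 for T > 0) in the top-left and zeros elsewhere, the quantity Δ = 4(m³ + t³) − m²t² − 18mt + 27 evaluated at t = tr(Id+TM), m = tr cof(Id+TM) equals −(det G)²·T⁶·((T²·det G − 4)·det G), i.e., Δ = −d²T⁶·𝒟 where d = det G and 𝒟 = (T²d − 4)d is the 2D mesohyperbolicity discriminant. -/
import Mathlib


open Matrix

/-- The cofactor matrix of a square matrix: the transpose of the adjugate. -/
noncomputable def cof (M : Matrix (Fin 3) (Fin 3) ℝ) : Matrix (Fin 3) (Fin 3) ℝ :=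
  (Matrix.adjugate M)ᵀ

/-- For the 3×3 embedding `M` of a 2×2 block `G` (with `tr G + T·det G = 0`, `T > 0`)
and `N = Id + T·M`, the quantity `Δ = 4(m³+t³) − m²t² − 18mt + 27` at `t = tr N`,
`m = tr cof N` equals `−(det G)²·T⁶·((T²·det G − 4)·det G)`. -/
theorem stmt_18 (G : Matrix (Fin 2) (Fin 2) ℝ) (T : ℝ) (hT : 0 < T)
    (hinc : G.trace + T * G.det = 0)
    (M : Matrix (Fin 3) (Fin 3) ℝ)
    (hM : ∀ i j : Fin 3,
      M i j = if h : (i : ℕ) < 2 ∧ (j : ℕ) < 2 then G ⟨i, h.1⟩ ⟨j, h.2⟩ else 0)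
    (N : Matrix (Fin 3) (Fin 3) ℝ) (hN : N = 1 + T • M)
    (t m : ℝ) (ht : t = N.trace) (hm : m = (cof N).trace) :
    4 * (m ^ 3 + t ^ 3) - m ^ 2 * t ^ 2 - 18 * m * t + 27
      = -(G.det ^ 2) * T ^ 6 * ((T ^ 2 * G.det - 4) * G.det) := by
  have key : T * G.trace = -(T ^ 2 * G.det) := by linear_combination T * hinc
  simp [Matrix.trace_fin_two, Matrix.det_fin_two] at key
  have ht' : t = 3 - T ^ 2 * G.det := by
    rw [ht, hN, Matrix.trace_fin_three]
    simp [hM, Matrix.add_apply, Matrix.smul_apply, Matrix.one_apply, Matrix.det_fin_two]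
    linear_combination key
  have hm' : m = 3 - T ^ 2 * G.det := by
    rw [hm, hN]
    simp [cof, Matrix.trace_transpose, Matrix.trace_fin_three, Matrix.adjugate_fin_three,
      hM, Matrix.add_apply, Matrix.smul_apply, Matrix.one_apply, Matrix.det_fin_two,
      Matrix.transpose_apply, Matrix.vecHead, Matrix.vecTail, Matrix.cons_val', Matrix.cons_val_zero,
      Matrix.cons_val_one, Matrix.head_cons, Function.comp]
    linear_combination 2 * key
  rw [ht', hm']; ring
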